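/- Let m : ℝ × ℝ → ℝ satisfy 0 < m_min ≤ m(x, u) for all (x, u), be bounded and Lipschitz in the first variable uniformly in the second, and let z : ℝ → ℝ be continuous. Let M(s, t, x) be the flow of y' = m(y, z(s)) with M(t,t,x) = x. Then for fixed s and x, the map t ↦ M(s, t, x) is strictly decreasing; in particular it is injective. -/

import Mathlib

/-!
Each trajectory `u ↦ M u t x` solves the scalar equation `y' = m(y, z u)`, whose right-hand side
is Lipschitz in `y`, so two distinct trajectories never meet and hence keep their order. For
`t₁ < t₂`, the trajectory started at time `t₂` is strictly increasing (as `m > 0`), so at time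
`t₁` it lies strictly below `x`, the value there of the trajectory started at time `t₁`; this
order persists up to time `s`.
-/

open Set

theorem ODE_solution_lt_of_lt {v : ℝ → ℝ → ℝ} {K : NNReal} {f g : ℝ → ℝ} {t₀ : ℝ}
    (hv : ∀ t, LipschitzWith K (v t))
    (hf : ∀ t, HasDerivAt f (v t (f t)) t) (hg : ∀ t, HasDerivAt g (v t (g t)) t)
    (h₀ : f t₀ < g t₀) (t : ℝ) : f t < g t := by
  by_contra! hle
  have hcont : Continuous (g - f) :=
    continuous_iff_continuousAt.mpr fun u => ((hg u).sub (hf u)).continuousAt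
  have hzero : (0 : ℝ) ∈ uIcc ((g - f) t) ((g - f) t₀) :=
    mem_uIcc.mpr (Or.inl ⟨sub_nonpos.mpr hle, (sub_pos.mpr h₀).le⟩)
  obtain ⟨c, -, hc⟩ := intermediate_value_uIcc hcont.continuousOn hzero
  have hfg : f = g := ODE_solution_unique_univ (s := fun _ => univ) (t₀ := c)
    (fun u => (hv u).lipschitzOnWith) (fun u => ⟨hf u, trivial⟩) (fun u => ⟨hg u, trivial⟩)
    (sub_eq_zero.mp hc).symm
  exact h₀.ne (congrFun hfg t₀)

theorem stmt_3_general (m : ℝ × ℝ → ℝ) (z : ℝ → ℝ) (L mmin : ℝ)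
    (hmmin : 0 < mmin) (hmlow : ∀ p, mmin ≤ m p)
    (hLip : ∀ (x₁ x₂ u : ℝ), |m (x₁, u) - m (x₂, u)| ≤ L * |x₁ - x₂|)
    (M : ℝ → ℝ → ℝ → ℝ)
    (hM0 : ∀ t x : ℝ, M t t x = x)
    (hMder : ∀ t x s : ℝ, HasDerivAt (fun u => M u t x) (m (M s t x, z s)) s) :
    ∀ s x : ℝ, StrictAnti (fun t => M s t x) ∧ Function.Injective (fun t => M s t x) := by
  intro s x
  have hv : ∀ u, LipschitzWith (Real.toNNReal L) fun y => m (y, z u) := fun u =>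
    LipschitzWith.of_dist_le' fun y₁ y₂ => by
      simpa only [Real.dist_eq] using hLip y₁ y₂ (z u)
  have hmono : ∀ t, StrictMono fun u => M u t x := fun t =>
    strictMono_of_hasDerivAt_pos (hMder t x) fun u => hmmin.trans_le (hmlow _)
  have hanti : StrictAnti fun t => M s t x := by
    intro t₁ t₂ h₁₂
    have hstart : M t₁ t₂ x < M t₁ t₁ x := by
      simpa only [hM0] using hmono t₂ h₁₂
    exact ODE_solution_lt_of_lt hv (hMder t₂ x) (hMder t₁ x) hstart s
  exact ⟨hanti, hanti.injective⟩

/-- If moreover `0 < m_min ≤ m`, the flow `t ↦ M(s,t,x)` of the initial time is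
strictly decreasing, in particular injective. -/
theorem stmt_3 (m : ℝ × ℝ → ℝ) (z : ℝ → ℝ) (L C mmin : ℝ)
    (hmc : Continuous m) (hmb : ∀ p, |m p| ≤ C)
    (hmmin : 0 < mmin) (hmlow : ∀ p, mmin ≤ m p)
    (hLip : ∀ (x₁ x₂ u : ℝ), |m (x₁, u) - m (x₂, u)| ≤ L * |x₁ - x₂|)
    (hz : Continuous z)
    (M : ℝ → ℝ → ℝ → ℝ)
    (hM0 : ∀ t x : ℝ, M t t x = x)
    (hMder : ∀ t x s : ℝ, HasDerivAt (fun u => M u t x) (m (M s t x, z s)) s) :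
    ∀ s x : ℝ, StrictAnti (fun t => M s t x) ∧ Function.Injective (fun t => M s t x) :=
  stmt_3_general m z L mmin hmmin hmlow hLip M hM0 hMder
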